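/- arXiv:1802.00467 — 2 statements merged into one kernel-verified Lean document; each statement's English description precedes it below -/
import Mathlib

section
/- Let Γ be a metrically homogeneous graph of generic type with diameter δ and let σ be a permutation of {1,…,δ} for which Γ^σ is a metrically homogeneous graph, with σ(2) = 1. Then either σ = ρ⁻¹, or σ is the transposition (1,2) and δ = 3. -/
open SimpleGraph

section Defs

variable {V : Type*}

/-- A graph is *metrically homogeneous* if it is connected and every
distance-preserving map defined on a finite set of vertices extends to a
distance-preserving bijection of the whole vertex set (with respect to the
path metric). -/
def IsMetricallyHomogeneous (G : SimpleGraph V) : Prop :=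
  G.Connected ∧
  ∀ (s : Finset V) (f : V → V),
    (∀ x ∈ s, ∀ y ∈ s, G.dist (f x) (f y) = G.dist x y) →
    ∃ g : V ≃ V, (∀ x y : V, G.dist (g x) (g y) = G.dist x y) ∧ ∀ x ∈ s, g x = f x

/-- `δ` is the diameter of `G` (with respect to the path metric). -/
def HasDiameter (G : SimpleGraph V) (δ : ℕ) : Prop :=
  (∀ x y : V, G.dist x y ≤ δ) ∧ ∃ x y : V, G.dist x y = δ

/-- The set of (nonzero) distances realized in `G`. -/
def DistSet (G : SimpleGraph V) : Set ℕ :=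
  {n : ℕ | 0 < n ∧ ∃ x y : V, G.dist x y = n}

/-- `G` is of *generic type*: any two vertices at distance `2` have infinitely
many common neighbors forming an independent set, and the set of neighbors of
any fixed vertex (with the induced metric) carries no non-trivial equivalence
relation invariant under all of its self-isometries. -/
def GenericType (G : SimpleGraph V) : Prop :=
  (∀ x y : V, G.dist x y = 2 →
    {z : V | G.Adj x z ∧ G.Adj y z}.Infinite ∧
    ∀ z w : V, (G.Adj x z ∧ G.Adj y z) → (G.Adj x w ∧ G.Adj y w) → ¬ G.Adj z w) ∧
  ∀ v : V, ∀ r : G.neighborSet v → G.neighborSet v → Prop,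
    Equivalence r →
    (∀ g : G.neighborSet v ≃ G.neighborSet v,
      (∀ x y : G.neighborSet v, G.dist (g x : V) (g y : V) = G.dist (x : V) (y : V)) →
      ∀ x y : G.neighborSet v, r x y → r (g x) (g y)) →
    (∀ x y, r x y) ∨ (∀ x y, r x y → x = y)

/-- A triangle of type `(a,b,c)` is realized in `G`. -/
def RealizesTriangle (G : SimpleGraph V) (a b c : ℕ) : Prop :=
  ∃ x y z : V, G.dist x y = a ∧ G.dist y z = b ∧ G.dist x z = c

/-- `G` contains a triangle (three distinct vertices) of perimeter `p`. -/
def RealizesPerimeter (G : SimpleGraph V) (p : ℕ) : Prop :=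
  ∃ x y z : V, x ≠ y ∧ y ≠ z ∧ x ≠ z ∧ G.dist x y + G.dist y z + G.dist x z = p

/-- `k` is the parameter `K₁` of `G`: the least `m` such that a triangle of
type `(m,m,1)` is realized in `G`. -/
def IsK1 (G : SimpleGraph V) (k : ℕ) : Prop :=
  IsLeast {m : ℕ | RealizesTriangle G m m 1} k

/-- `k` is the parameter `K₂` of `G`: the greatest `m` such that a triangle of
type `(m,m,1)` is realized in `G`. -/
def IsK2 (G : SimpleGraph V) (k : ℕ) : Prop :=
  IsGreatest {m : ℕ | RealizesTriangle G m m 1} k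

/-- `c` is the parameter `C₀` of `G` (relative to the diameter `δ`): the least
even number greater than `2δ` such that no triangle of perimeter `c` occurs. -/
def IsC0 (G : SimpleGraph V) (δ c : ℕ) : Prop :=
  IsLeast {c' : ℕ | Even c' ∧ 2 * δ < c' ∧ ¬ RealizesPerimeter G c'} c

/-- `c` is the parameter `C₁` of `G` (relative to the diameter `δ`): the least
odd number greater than `2δ` such that no triangle of perimeter `c` occurs. -/
def IsC1 (G : SimpleGraph V) (δ c : ℕ) : Prop :=
  IsLeast {c' : ℕ | Odd c' ∧ 2 * δ < c' ∧ ¬ RealizesPerimeter G c'} c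

/-- `G` (of diameter `δ`) is antipodal: every vertex has a unique vertex at
distance `δ` from it. -/
def IsAntipodal (G : SimpleGraph V) (δ : ℕ) : Prop :=
  ∀ v : V, ∃! w : V, G.dist v w = δ

/-- `G` is bipartite. -/
def IsBipartiteGraph (G : SimpleGraph V) : Prop :=
  ∃ f : V → Bool, ∀ x y : V, G.Adj x y → f x ≠ f y

/-- `G` is complete multipartite: there is an equivalence relation such that
two vertices are adjacent exactly when they are inequivalent. -/
def IsCompleteMultipartiteGraph (G : SimpleGraph V) : Prop :=
  ∃ r : V → V → Prop, Equivalence r ∧ ∀ x y : V, G.Adj x y ↔ ¬ r x y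

/-- `G` is an `n`-cycle. -/
def IsNCycle (G : SimpleGraph V) (n : ℕ) : Prop :=
  ∃ e : V ≃ ZMod n, ∀ x y : V, G.Adj x y ↔ (e x - e y = 1 ∨ e y - e x = 1)

/-- The permutation `ρ` of `{1,…,δ}`. -/
def rhoFun (δ i : ℕ) : ℕ := if 2 * i ≤ δ then 2 * i else 2 * (δ - i) + 1

/-- The permutation `ρ⁻¹` of `{1,…,δ}`. -/
def rhoInvFun (δ i : ℕ) : ℕ := if Even i then i / 2 else δ - (i - 1) / 2

/-- The involution `τ_ε` of `{1,…,δ}`, for `ε = 0` or `1`. -/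
def tauFun (δ ε i : ℕ) : ℕ := if Odd (min i (δ + ε - i)) then δ + ε - i else i

/-- The `n`-cycle graph on `ZMod n`. -/
def zmodCycleGraph (n : ℕ) : SimpleGraph (ZMod n) where
  Adj x y := x ≠ y ∧ (x - y = 1 ∨ y - x = 1)
  symm := ⟨fun x y h => ⟨h.1.symm, h.2.symm⟩⟩
  loopless := ⟨fun x h => h.1 rfl⟩

end Defs

/-! Since `σ 2 = 1`, the edges of `H` are exactly the pairs at `G`-distance `2`. Hence
`G.dist ≤ 2 * H.dist`, while a `G`-geodesic of length `2k` splits into `k` edges of `H`; so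
`σ (2k) = k`. The odd distances are then sent above `δ / 2`, and along a `G`-geodesic the
triangle inequality in `H` shows that `σ (2j + 1)` and `σ (2j + 3)` differ by exactly one, so `σ`
is monotone on odd numbers. Finally, following an `H`-geodesic between the ends of a `G`-edge
gives `σ 1 = 2` (forcing `δ ≤ 3`) or `σ 3 = σ 1 - 1`; in the latter case `σ` decreases on odd
numbers from `σ 1 = δ`, which is `ρ⁻¹`. -/

namespace SimpleGraph

variable {V : Type*} {G H : SimpleGraph V}

theorem Connected.exists_dist_eq_of_le (hG : G.Connected) {x y : V} {k : ℕ}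
    (hk : k ≤ G.dist x y) : ∃ z, G.dist x z = k ∧ G.dist z y = G.dist x y - k := by
  obtain ⟨p, hp⟩ := hG.exists_walk_length_eq_dist x y
  have htake := dist_le (p.take k)
  have hdrop := dist_le (p.drop k)
  have htri : G.dist x y ≤ G.dist x (p.getVert k) + G.dist (p.getVert k) y := hG.dist_triangle
  simp only [Walk.take_length, Walk.drop_length] at htake hdrop
  exact ⟨p.getVert k, by omega, by omega⟩

theorem Connected.dist_le_mul_dist (hG : G.Connected) {x y : V} (hH : H.Reachable x y) {c : ℕ}
    (hc : ∀ u v, H.Adj u v → G.dist u v ≤ c) : G.dist x y ≤ c * H.dist x y := by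
  obtain ⟨p, hp⟩ := hH.exists_walk_length_eq_dist
  rw [← hp]
  clear hp hH
  induction p with
  | nil => simp
  | @cons u v w huv p ih =>
    calc G.dist u w ≤ G.dist u v + G.dist v w := hG.dist_triangle
      _ ≤ c + c * p.length := add_le_add (hc u v huv) ih
      _ = c * (Walk.cons huv p).length := by rw [Walk.length_cons]; ring

theorem Connected.dist_le_of_dist_eq_two_mul (hG : G.Connected)
    (hH : ∀ u v, G.dist u v = 2 → H.Adj u v) :
    ∀ k : ℕ, ∀ x y : V, G.dist x y = 2 * k → H.dist x y ≤ k := by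
  intro k
  induction k with
  | zero =>
    intro x y hxy
    rw [hG.dist_eq_zero_iff.1 hxy, dist_self]
  | succ k ih =>
    intro x y hxy
    obtain ⟨z, hxz, hzy⟩ := hG.exists_dist_eq_of_le (x := x) (y := y) (k := 2) (by omega)
    have hadj := hH x z hxz
    calc H.dist x y ≤ H.dist x z + H.dist z y := hadj.reachable.dist_triangle_left y
      _ ≤ 1 + k := add_le_add (dist_eq_one_iff_adj.2 hadj).le (ih z y (by omega))
      _ = k + 1 := add_comm 1 k

end SimpleGraph

theorem Int.eq_add_mul_sub_of_injOn_of_abs_sub_eq_one {u : ℕ → ℤ} {M : ℕ}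
    (hinj : Set.InjOn u (Set.Iio M)) (hstep : ∀ j, j + 1 < M → |u (j + 1) - u j| = 1) :
    ∀ j < M, u j = u 0 + j * (u 1 - u 0) := by
  intro j
  induction j using Nat.twoStepInduction with
  | zero => simp
  | one => simp
  | more j ih₀ ih₁ =>
    intro hj
    have hne : u (j + 2) ≠ u j := fun h => by
      have := hinj (by simp only [Set.mem_Iio]; omega) (by simp only [Set.mem_Iio]; omega) h
      omega
    have hsame : |u (j + 2) - u (j + 1)| = |u 1 - u 0| :=
      (hstep (j + 1) hj).trans (hstep 0 (by omega)).symm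
    have ih₁' := ih₁ (by omega)
    push_cast at ih₁' ⊢
    rcases abs_eq_abs.1 hsame with h | h
    · linear_combination h + ih₁'
    · exact absurd (by linear_combination h + ih₁' - ih₀ (by omega)) hne

theorem rhoInvFun_two_mul (δ k : ℕ) : rhoInvFun δ (2 * k) = k := by
  simp [rhoInvFun]

theorem rhoInvFun_two_mul_add_one (δ j : ℕ) : rhoInvFun δ (2 * j + 1) = δ - j := by
  simp [rhoInvFun]

/-- `H` is the twist `Γ^σ` of `Γ = G`. -/
structure IsTwist {V : Type*} (G H : SimpleGraph V) (σ : ℕ → ℕ) : Prop where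
  connected : G.Connected
  connected_twist : H.Connected
  dist_eq : ∀ x y : V, x ≠ y → H.dist x y = σ (G.dist x y)

namespace IsTwist

variable {V : Type*} {G H : SimpleGraph V} {σ : Equiv.Perm ℕ} {δ : ℕ}

theorem dist_eq_of_pos (ht : IsTwist G H σ) {x y : V} (hxy : 0 < G.dist x y) :
    H.dist x y = σ (G.dist x y) :=
  ht.dist_eq x y fun h => by simp [h] at hxy

theorem adj_iff_dist_eq_two (ht : IsTwist G H σ) (h2 : σ 2 = 1) {x y : V} :
    H.Adj x y ↔ G.dist x y = 2 := by
  rw [← dist_eq_one_iff_adj]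
  by_cases hxy : x = y
  · simp [hxy]
  rw [ht.dist_eq x y hxy, ← h2, σ.injective.eq_iff]

theorem apply_two_mul (ht : IsTwist G H σ) (h2 : σ 2 = 1) {x y : V} {k : ℕ} (hk : 0 < k)
    (hxy : G.dist x y = 2 * k) : σ (2 * k) = k := by
  have hle : H.dist x y ≤ k :=
    ht.connected.dist_le_of_dist_eq_two_mul (fun _ _ => (ht.adj_iff_dist_eq_two h2).2) k x y hxy
  have hge : G.dist x y ≤ 2 * H.dist x y :=
    ht.connected.dist_le_mul_dist (ht.connected_twist.preconnected x y)
      fun _ _ huv => ((ht.adj_iff_dist_eq_two h2).1 huv).le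
  rw [ht.dist_eq_of_pos (by omega), hxy] at hle hge
  omega

theorem abs_apply_add_two_sub (ht : IsTwist G H σ) (h2 : σ 2 = 1) {x y : V} {a : ℕ} (ha : 0 < a)
    (hxy : G.dist x y = a + 2) : |(σ (a + 2) : ℤ) - σ a| = 1 := by
  obtain ⟨z, hxz, hzy⟩ := ht.connected.exists_dist_eq_of_le (x := x) (y := y) (k := a) (by omega)
  rw [hxy, Nat.add_sub_cancel_left] at hzy
  have hHxy := ht.dist_eq_of_pos (x := x) (y := y) (by omega)
  have hHxz := ht.dist_eq_of_pos (x := x) (y := z) (by omega)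
  have hHzy := ht.dist_eq_of_pos (x := z) (y := y) (by omega)
  rw [hxy] at hHxy
  rw [hxz] at hHxz
  rw [hzy] at hHzy
  have h₁ : H.dist x y ≤ H.dist x z + H.dist z y := ht.connected_twist.dist_triangle
  have h₂ : H.dist x z ≤ H.dist x y + H.dist y z := ht.connected_twist.dist_triangle
  have hsymm : H.dist y z = H.dist z y := dist_comm
  have hdiff : σ (a + 2) ≠ σ a := σ.injective.ne (by omega)
  rw [abs_eq zero_le_one]
  omega

theorem apply_one_eq_two_or (ht : IsTwist G H σ) (h2 : σ 2 = 1) {x y : V}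
    (hxy : G.dist x y = 1) : σ 1 = 2 ∨ σ 3 + 1 = σ 1 := by
  have hne : x ≠ y := by
    rintro rfl
    simp at hxy
  have hHxy : H.dist x y = σ 1 := by rw [ht.dist_eq x y hne, hxy]
  have hσ1 : 2 ≤ σ 1 := by
    have := ht.connected_twist.pos_dist_of_ne hne
    have : σ 1 ≠ σ 2 := σ.injective.ne (by omega)
    omega
  -- `z` is the last vertex before `y` on an `H`-geodesic from `x`; it is at `G`-distance `2`
  -- from `y`, hence at most `3` from `x`.
  obtain ⟨z, hxz, hzy⟩ :=
    ht.connected_twist.exists_dist_eq_of_le (x := x) (y := y) (k := σ 1 - 1) (by omega)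
  rw [hHxy] at hzy
  have hGzy : G.dist z y = 2 :=
    (ht.adj_iff_dist_eq_two h2).1 (dist_eq_one_iff_adj.1 (by omega))
  have hxz_ne : x ≠ z := by
    rintro rfl
    simp at hxz
    omega
  have hσxz : σ (G.dist x z) = σ 1 - 1 := by rw [← ht.dist_eq x z hxz_ne, hxz]
  have hGxz_pos := ht.connected.pos_dist_of_ne hxz_ne
  have hGxz_le : G.dist x z ≤ 3 := by
    have : G.dist x z ≤ G.dist x y + G.dist y z := ht.connected.dist_triangle
    rw [dist_comm (u := y), hxy, hGzy] at this
    exact this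
  generalize G.dist x z = d at hσxz hGxz_pos hGxz_le
  interval_cases d <;> omega

theorem lt_apply_two_mul_add_one (ht : IsTwist G H σ) (h2 : σ 2 = 1)
    (hperm : ∀ i ∈ Finset.Icc 1 δ, σ i ∈ Finset.Icc 1 δ)
    (hreal : ∀ k ≤ δ, ∃ x y : V, G.dist x y = k) {j : ℕ} (hj : 2 * j + 1 ≤ δ) :
    δ / 2 < σ (2 * j + 1) := by
  by_contra! hle
  have hpos := (Finset.mem_Icc.1 (hperm (2 * j + 1) (Finset.mem_Icc.2 ⟨by omega, hj⟩))).1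
  obtain ⟨x, y, hxy⟩ := hreal (2 * σ (2 * j + 1)) (by omega)
  have := σ.injective (ht.apply_two_mul h2 hpos hxy)
  omega

theorem eq_rhoInvFun (ht : IsTwist G H σ) (h2 : σ 2 = 1)
    (hperm : ∀ i ∈ Finset.Icc 1 δ, σ i ∈ Finset.Icc 1 δ)
    (hreal : ∀ k ≤ δ, ∃ x y : V, G.dist x y = k) (h31 : σ 3 + 1 = σ 1) :
    ∀ i ∈ Finset.Icc 1 δ, σ i = rhoInvFun δ i := by
  have hinj : Set.InjOn (fun j => (σ (2 * j + 1) : ℤ)) (Set.Iio ((δ + 1) / 2)) :=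
    fun i _ j _ h => by
      have := σ.injective (Nat.cast_injective h)
      omega
  have hstep : ∀ j, j + 1 < (δ + 1) / 2 →
      |(σ (2 * (j + 1) + 1) : ℤ) - σ (2 * j + 1)| = 1 := by
    intro j hj
    obtain ⟨x, y, hxy⟩ := hreal (2 * j + 1 + 2) (by omega)
    exact ht.abs_apply_add_two_sub h2 (by omega) hxy
  have hodd : ∀ j, 2 * j + 1 ≤ δ → σ (2 * j + 1) + j = σ 1 := by
    intro j hj
    have hdir : (σ 3 : ℤ) - σ 1 = -1 := by omega
    have := Int.eq_add_mul_sub_of_injOn_of_abs_sub_eq_one hinj hstep j (by omega)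
    simp only [mul_zero, zero_add, mul_one, Nat.reduceAdd, hdir] at this
    omega
  intro i hi
  rw [Finset.mem_Icc] at hi
  have hσ1 : σ 1 = δ := by
    have hlast := hodd ((δ + 1) / 2 - 1) (by omega)
    have hlow := ht.lt_apply_two_mul_add_one h2 hperm hreal (j := (δ + 1) / 2 - 1) (by omega)
    have hup := (Finset.mem_Icc.1 (hperm 1 (Finset.mem_Icc.2 ⟨le_rfl, by omega⟩))).2
    omega
  obtain ⟨k, rfl | rfl⟩ := Nat.even_or_odd' i
  · obtain ⟨x, y, hxy⟩ := hreal (2 * k) hi.2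
    rw [rhoInvFun_two_mul, ht.apply_two_mul h2 (by omega) hxy]
  · rw [rhoInvFun_two_mul_add_one]
    have := hodd k hi.2
    omega

end IsTwist

theorem sigma_two_eq_one_implies_rho_inv_general {V : Type*} (G H : SimpleGraph V) (δ : ℕ)
    (σ : Equiv.Perm ℕ)
    (hG : IsMetricallyHomogeneous G)
    (hdiam : HasDiameter G δ)
    (hperm : ∀ i ∈ Finset.Icc 1 δ, σ i ∈ Finset.Icc 1 δ)
    (hH : IsMetricallyHomogeneous H)
    (htw : ∀ x y : V, x ≠ y → H.dist x y = σ (G.dist x y))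
    (h2 : σ 2 = 1) :
    (∀ i ∈ Finset.Icc 1 δ, σ i = rhoInvFun δ i) ∨
    ((σ 1 = 2 ∧ σ 2 = 1 ∧ σ 3 = 3) ∧ δ = 3) := by
  have ht : IsTwist G H σ := ⟨hG.1, hH.1, htw⟩
  obtain ⟨-, x₀, y₀, hδ⟩ := hdiam
  have hreal : ∀ k ≤ δ, ∃ x y : V, G.dist x y = k := fun k hk =>
    have ⟨z, hz, _⟩ := ht.connected.exists_dist_eq_of_le (hδ ▸ hk)
    ⟨x₀, z, hz⟩
  rcases Nat.eq_zero_or_pos δ with rfl | hδ_pos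
  · exact Or.inl (by simp)
  obtain ⟨x, y, hxy⟩ := hreal 1 hδ_pos
  rcases ht.apply_one_eq_two_or h2 hxy with h1 | h31
  · have hδ3 : δ ≤ 3 := by
      have := ht.lt_apply_two_mul_add_one h2 hperm hreal (j := 0) hδ_pos
      rw [mul_zero, zero_add, h1] at this
      omega
    have hσ1 := hperm 1 (by simp; omega)
    have hσ3 := hperm 3
    have hσ3_ne : σ 3 ≠ σ 1 ∧ σ 3 ≠ σ 2 := ⟨σ.injective.ne (by omega), σ.injective.ne (by omega)⟩
    simp only [Finset.mem_Icc] at hσ1 hσ3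
    interval_cases δ
    · omega
    · exact Or.inl fun i hi => by fin_cases hi <;> simp [rhoInvFun, h1, h2]
    · right
      omega
  · exact Or.inl (ht.eq_rhoInvFun h2 hperm hreal h31)

/-- if `σ(2) = 1` then `σ = ρ⁻¹`, or `σ` is the transposition
`(1,2)` and `δ = 3`. -/
theorem sigma_two_eq_one_implies_rho_inv {V : Type*} (G H : SimpleGraph V) (δ : ℕ)
    (σ : Equiv.Perm ℕ)
    (hG : IsMetricallyHomogeneous G) (hgen : GenericType G)
    (hdiam : HasDiameter G δ)
    (hperm : ∀ i ∈ Finset.Icc 1 δ, σ i ∈ Finset.Icc 1 δ)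
    (hH : IsMetricallyHomogeneous H)
    (htw : ∀ x y : V, x ≠ y → H.dist x y = σ (G.dist x y))
    (h2 : σ 2 = 1) :
    (∀ i ∈ Finset.Icc 1 δ, σ i = rhoInvFun δ i) ∨
    ((σ 1 = 2 ∧ σ 2 = 1 ∧ σ 3 = 3) ∧ δ = 3) :=
  sigma_two_eq_one_implies_rho_inv_general G H δ σ hG hdiam hperm hH htw h2
end

section
/- Let Γ be a metrically homogeneous graph of generic type with diameter δ ≥ 3, and let σ be a permutation of {1,…,δ} such that Γ^σ is itself a metrically homogeneous graph. Assume that σ(1) ≥ δ−1, σ(1) > 2, and σ⁻¹(1) > 2. Then σ(2) = 2. -/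
open SimpleGraph

/-!
Let `k = σ⁻¹ 1`. A triangle realized in `G` is carried by `σ` to a triangle of `G^σ`, so it must
satisfy the triangle inequality after twisting; likewise for `σ⁻¹`. Genericity realizes the
triangle `(k, k, 2)` when `k < δ`, and its image gives `σ 2 ≤ 2 σ k = 2`. When `k = δ`, the
geodesic triangles `(a, b, a + b)` force `σ 1 = δ`, and, if `σ 2 ≠ 2`, pin `σ` down to `δ = 5`,
`σ = (1 5)(2 3)`, a case that takes an explicit configuration of points to exclude.
-/

namespace SimpleGraph

variable {V : Type*} {G : SimpleGraph V}

lemma Connected.exists_dist_eq_of_dist_eq_add (hG : G.Connected) {x y : V} {a b : ℕ}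
    (h : G.dist x y = a + b) : ∃ z, G.dist x z = a ∧ G.dist z y = b := by
  obtain ⟨w, hw⟩ := hG.exists_walk_length_eq_dist x y
  have hxz : G.dist x (w.getVert a) ≤ a := (dist_le (w.take a)).trans (by simp)
  have hzy : G.dist (w.getVert a) y ≤ b := (dist_le (w.drop a)).trans (by simp; omega)
  have := hG.dist_triangle (u := x) (v := w.getVert a) (w := y)
  exact ⟨w.getVert a, by omega, by omega⟩

lemma Connected.dist_triangle_three (hG : G.Connected) (x y z : V) :
    G.dist x z ≤ G.dist x y + G.dist y z ∧ G.dist x y ≤ G.dist x z + G.dist y z ∧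
      G.dist y z ≤ G.dist x y + G.dist x z := by
  have h₁ := hG.dist_triangle (u := x) (v := y) (w := z)
  have h₂ := hG.dist_triangle (u := x) (v := z) (w := y)
  have h₃ := hG.dist_triangle (u := y) (v := x) (w := z)
  rw [dist_comm (u := z)] at h₂
  rw [dist_comm (u := y) (v := x)] at h₃
  exact ⟨h₁, h₂, h₃⟩

lemma Connected.realizesTriangle_add (hG : G.Connected) {a b : ℕ}
    (h : a + b ∈ DistSet G) : RealizesTriangle G a b (a + b) := by
  obtain ⟨-, x, y, hxy⟩ := h
  obtain ⟨z, hxz, hzy⟩ := hG.exists_dist_eq_of_dist_eq_add hxy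
  exact ⟨x, z, y, hxz, hzy, hxy⟩

end SimpleGraph

section Twist

variable {V : Type*} {G H : SimpleGraph V}

/-- `H` is the graph `G^σ`. -/
def IsTwist_s10 (G H : SimpleGraph V) (σ : Equiv.Perm ℕ) : Prop :=
  ∀ x y : V, x ≠ y → H.dist x y = σ (G.dist x y)

lemma IsTwist_s10.symm {σ : Equiv.Perm ℕ} (htw : IsTwist_s10 G H σ) : IsTwist_s10 H G σ.symm := fun x y h ↦ by
  rw [htw x y h, Equiv.symm_apply_apply]

lemma IsTwist_s10.mapsTo_distSet {σ : Equiv.Perm ℕ} (htw : IsTwist_s10 G H σ) (hH : H.Connected) :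
    Set.MapsTo σ (DistSet G) (DistSet H) := by
  rintro n ⟨hn, x, y, rfl⟩
  have hxy : x ≠ y := by rintro rfl; simp at hn
  exact ⟨htw x y hxy ▸ hH.pos_dist_of_ne hxy, x, y, htw x y hxy⟩

lemma HasDiameter.Icc_subset_distSet {δ : ℕ} (hdiam : HasDiameter G δ) (hG : G.Connected) :
    Set.Icc 1 δ ⊆ DistSet G := by
  rintro n ⟨hn, hnδ⟩
  obtain ⟨-, x, y, hxy⟩ := hdiam
  obtain ⟨z, hxz, -⟩ := hG.exists_dist_eq_of_dist_eq_add (a := n) (b := δ - n) (x := x) (y := y)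
    (by omega)
  exact ⟨hn, x, z, hxz⟩

lemma RealizesTriangle.le_add (hG : G.Connected) {a b c : ℕ} (hT : RealizesTriangle G a b c) :
    c ≤ a + b ∧ a ≤ b + c ∧ b ≤ a + c := by
  obtain ⟨x, y, z, rfl, rfl, rfl⟩ := hT
  obtain ⟨h₁, h₂, h₃⟩ := hG.dist_triangle_three x y z
  exact ⟨h₁, by omega, by omega⟩

lemma RealizesTriangle.twist {σ : Equiv.Perm ℕ} (htw : IsTwist_s10 G H σ) {a b c : ℕ}
    (hT : RealizesTriangle G a b c) (ha : a ≠ 0) (hb : b ≠ 0) (hc : c ≠ 0) :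
    RealizesTriangle H (σ a) (σ b) (σ c) := by
  obtain ⟨x, y, z, rfl, rfl, rfl⟩ := hT
  have hne {u v : V} (h : G.dist u v ≠ 0) : u ≠ v := by rintro rfl; simp at h
  exact ⟨x, y, z, htw x y (hne ha), htw y z (hne hb), htw x z (hne hc)⟩

/-- Take `p` at distance `m - 1` from `x` on a geodesic `x … y` of length `m + 1`: two
non-adjacent common neighbours of `p` and `y` are both at distance `m` from `x`. -/
lemma GenericType.realizesTriangle_two (hgen : GenericType G) (hG : G.Connected) {m : ℕ}
    (hm : 0 < m) (h : m + 1 ∈ DistSet G) : RealizesTriangle G m m 2 := by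
  obtain ⟨-, x, y, hxy⟩ := h
  obtain ⟨p, hxp, hpy⟩ :=
    hG.exists_dist_eq_of_dist_eq_add (a := m - 1) (b := 2) (x := x) (y := y) (by omega)
  obtain ⟨hinf, hindep⟩ := hgen.1 p y hpy
  obtain ⟨z, hz, z', hz', hne⟩ := hinf.nontrivial
  have hxw {w : V} (hw : G.Adj p w ∧ G.Adj y w) : G.dist x w = m := by
    have := dist_eq_one_iff_adj.mpr hw.1
    have := dist_eq_one_iff_adj.mpr hw.2.symm
    have := hG.dist_triangle_three x p w
    have := hG.dist_triangle_three x w y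
    omega
  have hzz' : G.dist z z' = 2 := by
    have := hG.one_lt_dist_of_ne_of_not_adj hne (hindep z z' hz hz')
    have := hG.dist_triangle (u := z) (v := p) (w := z')
    have := dist_eq_one_iff_adj.mpr hz.1.symm
    have := dist_eq_one_iff_adj.mpr hz'.1
    omega
  exact ⟨z, x, z', by rw [SimpleGraph.dist_comm, hxw hz], hxw hz', hzz'⟩

def RespectsGeodesicTriangles (δ : ℕ) (f : ℕ → ℕ) : Prop :=
  ∀ a b c, 0 < a → 0 < b → a + b = c → c ≤ δ → f a ≤ f b + f c

lemma IsTwist_s10.respectsGeodesicTriangles {δ : ℕ} {σ : Equiv.Perm ℕ} (htw : IsTwist_s10 G H σ)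
    (hG : G.Connected) (hH : H.Connected) (hreal : Set.Icc 1 δ ⊆ DistSet G) :
    RespectsGeodesicTriangles δ σ := by
  rintro a b _ ha hb rfl hab
  have hT := hG.realizesTriangle_add (hreal ⟨by omega, hab⟩)
  exact ((hT.twist htw (by omega) (by omega) (by omega)).le_add hH).2.1

section Permutation

variable {δ : ℕ} {σ : Equiv.Perm ℕ}

lemma perm_symm_mem_Icc (hperm : ∀ i ∈ Finset.Icc 1 δ, σ i ∈ Finset.Icc 1 δ) {i : ℕ}
    (hi : 1 ≤ i ∧ i ≤ δ) : 1 ≤ σ.symm i ∧ σ.symm i ≤ δ :=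
  Finset.mem_Icc.mp (Equiv.Perm.perm_symm_on_of_perm_on_finset hperm (Finset.mem_Icc.mpr hi))

lemma apply_one_eq_of_apply_eq_one (hδ : 0 < δ)
    (hperm : ∀ i ∈ Finset.Icc 1 δ, σ i ∈ Finset.Icc 1 δ)
    (hσ' : RespectsGeodesicTriangles δ σ.symm) (hσδ : σ δ = 1) (h1 : δ - 1 ≤ σ 1)
    (h1' : 2 < σ 1) : σ 1 = δ := by
  have := Finset.mem_Icc.mp (hperm 1 (Finset.mem_Icc.mpr ⟨le_rfl, hδ⟩))
  by_contra hne
  have hτ1 : σ.symm 1 = δ := by rw [← hσδ, Equiv.symm_apply_apply]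
  have hτ : σ.symm (δ - 1) = 1 := by rw [show δ - 1 = σ 1 by omega, Equiv.symm_apply_apply]
  have hτδ : σ.symm δ = δ - 1 := by
    have := hσ' 1 (δ - 1) δ one_pos (by omega) (by omega) le_rfl
    have := perm_symm_mem_Icc hperm (i := δ) ⟨by omega, le_rfl⟩
    have := σ.symm.injective.ne (show δ ≠ 1 by omega)
    omega
  have := hσ' 1 (δ - 2) (δ - 1) one_pos (by omega) (by omega) (by omega)
  have := perm_symm_mem_Icc hperm (i := δ - 2) ⟨by omega, by omega⟩
  have := σ.symm.injective.ne (show δ - 2 ≠ 1 by omega)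
  have := σ.symm.injective.ne (show δ - 2 ≠ δ by omega)
  omega

lemma apply_pred_eq_pred (hδ : 3 ≤ δ) (hperm : ∀ i ∈ Finset.Icc 1 δ, σ i ∈ Finset.Icc 1 δ)
    (hσ : RespectsGeodesicTriangles δ σ) (hσδ : σ δ = 1) (hσ1 : σ 1 = δ) :
    σ (δ - 1) = δ - 1 := by
  have := hσ 1 (δ - 1) δ one_pos (by omega) (by omega) le_rfl
  have := Finset.mem_Icc.mp (hperm (δ - 1) (Finset.mem_Icc.mpr ⟨by omega, by omega⟩))
  have := σ.injective.ne (show δ - 1 ≠ 1 by omega)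
  omega

/-- The inequalities at the neighbours of `m = σ⁻¹ 2` force `m = δ - 2`; then the triangle
`(2, δ - 2, δ)` gives `σ 2 = 3`, and the triangle `(1, 3, 4)` for `σ⁻¹` leaves only `δ = 5`. -/
lemma eq_five_of_apply_two_ne_two (hδ : 3 ≤ δ)
    (hperm : ∀ i ∈ Finset.Icc 1 δ, σ i ∈ Finset.Icc 1 δ) (hσ : RespectsGeodesicTriangles δ σ)
    (hσ' : RespectsGeodesicTriangles δ σ.symm) (hσδ : σ δ = 1) (hσ1 : σ 1 = δ) (h2 : σ 2 ≠ 2) :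
    δ = 5 ∧ σ 2 = 3 ∧ σ 3 = 2 ∧ σ 4 = 4 := by
  have hb (i : ℕ) (hi : 1 ≤ i ∧ i ≤ δ) := Finset.mem_Icc.mp (hperm i (Finset.mem_Icc.mpr hi))
  have hpred := apply_pred_eq_pred hδ hperm hσ hσδ hσ1
  obtain ⟨m, hσm⟩ : ∃ m, σ m = 2 := ⟨σ.symm 2, σ.apply_symm_apply 2⟩
  have hτ2 : σ.symm 2 = m := σ.symm_apply_eq.mpr hσm.symm
  have hm : 3 ≤ m ∧ m ≤ δ - 2 := by
    have := hτ2 ▸ perm_symm_mem_Icc hperm (i := 2) ⟨one_le_two, by omega⟩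
    have : m ≠ 1 := by intro h; rw [h] at hσm; omega
    have : m ≠ 2 := by intro h; rw [h] at hσm; omega
    have : m ≠ δ - 1 := by intro h; rw [h] at hσm; omega
    have : m ≠ δ := by intro h; rw [h] at hσm; omega
    omega
  have hmδ : m = δ - 2 := by
    have := hσ 1 (m - 1) m one_pos (by omega) (by omega) (by omega)
    have := hσ 1 m (m + 1) one_pos (by omega) (by omega) (by omega)
    have := hb (m - 1) ⟨by omega, by omega⟩
    have := hb (m + 1) ⟨by omega, by omega⟩
    have := σ.injective.ne (show m - 1 ≠ 1 by omega)
    have := σ.injective.ne (show m - 1 ≠ δ - 1 by omega)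
    have := σ.injective.ne (show m + 1 ≠ 1 by omega)
    have := σ.injective.ne (show m + 1 ≠ m - 1 by omega)
    have : σ (m + 1) = σ (δ - 1) := by omega
    have := σ.injective this
    omega
  subst hmδ
  have h2 : σ 2 = 3 := by
    have := hσ 2 (δ - 2) δ two_pos (by omega) (by omega) le_rfl
    have := hb 2 ⟨one_le_two, by omega⟩
    have := σ.injective.ne (show 2 ≠ δ by omega)
    omega
  have hδ5 : δ = 5 := by
    have := hσ' 1 3 4 one_pos (by omega) rfl (by omega)
    have := perm_symm_mem_Icc hperm (i := 4) ⟨by omega, by omega⟩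
    have : σ.symm 1 = δ := σ.symm_apply_eq.mpr hσδ.symm
    have : σ.symm 3 = 2 := σ.symm_apply_eq.mpr h2.symm
    have : σ.symm (δ - 1) = δ - 1 := σ.symm_apply_eq.mpr hpred.symm
    have := σ.symm.injective.ne (show 4 ≠ 1 by omega)
    have := σ.symm.injective.ne (show 4 ≠ 2 by omega)
    by_contra hne
    have := σ.symm.injective.ne (show 4 ≠ δ - 1 by omega)
    omega
  subst hδ5
  exact ⟨rfl, h2, hσm, hpred⟩

end Permutation

/-- `σ = (1 5)(2 3)` passes every test of `RespectsGeodesicTriangles`, so it is refuted by a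
configuration instead: each new point lies on a geodesic of `G` or of `H` between earlier ones, its
distances to them are forced by the triangle inequality in one of the two metrics, and the last
point violates it. -/
lemma not_isTwist_of_hasDiameter_five (hG : G.Connected) (hH : H.Connected) {σ : Equiv.Perm ℕ}
    (htw : IsTwist_s10 G H σ) (hdiam : HasDiameter G 5) (h1 : σ 1 = 5) (h2 : σ 2 = 3) (h3 : σ 3 = 2)
    (h4 : σ 4 = 4) (h5 : σ 5 = 1) : False := by
  have hD (x y : V) : G.dist x y = 0 ∧ H.dist x y = 0 ∨ G.dist x y = 1 ∧ H.dist x y = 5 ∨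
      G.dist x y = 2 ∧ H.dist x y = 3 ∨ G.dist x y = 3 ∧ H.dist x y = 2 ∨
      G.dist x y = 4 ∧ H.dist x y = 4 ∨ G.dist x y = 5 ∧ H.dist x y = 1 := by
    rcases eq_or_ne x y with rfl | hxy
    · simp
    · have := hdiam.1 x y
      have := hG.pos_dist_of_ne hxy
      rw [htw x y hxy]
      interval_cases G.dist x y <;> simp [*]
  have tG := hG.dist_triangle_three
  have tH := hH.dist_triangle_three
  obtain ⟨-, a, b, hab⟩ := hdiam.Icc_subset_distSet hG (show 2 ∈ Set.Icc 1 5 by simp)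
  obtain ⟨c, hac, hbc⟩ := hG.exists_dist_eq_of_dist_eq_add (show G.dist a b = 1 + 1 from hab)
  rw [SimpleGraph.dist_comm] at hbc
  have ab := hD a b
  have ac := hD a c
  have bc := hD b c
  obtain ⟨p, hap, hbp⟩ := hH.exists_dist_eq_of_dist_eq_add (show H.dist a b = 1 + 2 by omega)
  rw [SimpleGraph.dist_comm] at hbp
  have ap := hD a p
  have bp := hD b p
  have cp : G.dist c p = 4 ∧ H.dist c p = 4 := by
    have := tG a c p; have := tG b c p; have := hD c p; omega
  obtain ⟨u, hbu, hpu⟩ := hH.exists_dist_eq_of_dist_eq_add (show H.dist b p = 1 + 1 by omega)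
  rw [SimpleGraph.dist_comm] at hpu
  have bu := hD b u
  have pu := hD p u
  have au : G.dist a u = 3 ∧ H.dist a u = 2 := by
    have := tH a b u; have := tH a p u; have := hD a u; omega
  have cu : G.dist c u = 4 ∧ H.dist c u = 4 := by
    have := tG b c u; have := tG a c u; have := hD c u; omega
  obtain ⟨f, hcf, hpf⟩ := hH.exists_dist_eq_of_dist_eq_add (show H.dist c p = 2 + 2 by omega)
  rw [SimpleGraph.dist_comm] at hpf
  have cf := hD c f
  have pf := hD p f
  have af : G.dist a f = 2 ∧ H.dist a f = 3 := by
    have := tH a c f; have := tH a p f; have := hD a f; omega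
  have bf : G.dist b f = 2 ∨ G.dist b f = 4 := by
    have := tH b c f; have := tH b p f; have := hD b f; omega
  have huf := hD u f
  have := tH p u f
  have := tH b u f
  have := tG b u f
  rcases bf with bf | bf
  · have uf : G.dist u f = 3 ∧ H.dist u f = 2 := by have := hD b f; omega
    obtain ⟨q, hcq, hfq⟩ := hH.exists_dist_eq_of_dist_eq_add (show H.dist c f = 1 + 1 by omega)
    rw [SimpleGraph.dist_comm] at hfq
    have pq : G.dist p q = 2 := by
      have := tH c p q; have := tH p f q; have := hD p q; omega
    have uq : G.dist u q = 2 := by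
      have := tH c u q; have := tH u f q; have := hD u q; omega
    have := tG p u q
    omega
  · have uf : G.dist u f = 2 := by have := hD b f; omega
    obtain ⟨q, huq, hfq⟩ := hG.exists_dist_eq_of_dist_eq_add (show G.dist u f = 1 + 1 by omega)
    rw [SimpleGraph.dist_comm] at hfq
    have uq := hD u q
    have fq := hD f q
    have aq : G.dist a q = 2 ∧ H.dist a q = 3 := by
      have := tG a u q; have := tG a f q; have := tH a u q; have := hD a q; omega
    have cq : H.dist c q = 2 := by
      have := tG c u q; have := tG a c q; have := hD c q; omega
    have := tH c f q
    omega

end Twist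

/-- if `σ(1) ≥ δ-1`, `σ(1) > 2` and `σ⁻¹(1) > 2`, then
`σ(2) = 2`. -/
theorem sigma_two_eq_two {V : Type*} (G H : SimpleGraph V) (δ : ℕ) (hδ : 3 ≤ δ)
    (σ : Equiv.Perm ℕ)
    (hG : IsMetricallyHomogeneous G) (hgen : GenericType G)
    (hdiam : HasDiameter G δ)
    (hperm : ∀ i ∈ Finset.Icc 1 δ, σ i ∈ Finset.Icc 1 δ)
    (hH : IsMetricallyHomogeneous H)
    (htw : ∀ x y : V, x ≠ y → H.dist x y = σ (G.dist x y))
    (h1 : δ - 1 ≤ σ 1) (h1' : 2 < σ 1) (hinv1 : 2 < σ.symm 1) :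
    σ 2 = 2 := by
  have htw : IsTwist_s10 G H σ := htw
  obtain ⟨hGc, -⟩ := hG
  obtain ⟨hHc, -⟩ := hH
  have hdistG := hdiam.Icc_subset_distSet hGc
  have hdistH : Set.Icc 1 δ ⊆ DistSet H := fun j hj ↦ by
    simpa using htw.mapsTo_distSet hHc (hdistG (perm_symm_mem_Icc hperm hj))
  have hσ := htw.respectsGeodesicTriangles hGc hHc hdistG
  have hσ' := htw.symm.respectsGeodesicTriangles hHc hGc hdistH
  have hk := perm_symm_mem_Icc hperm (i := 1) ⟨le_rfl, by omega⟩
  have hσ2 := Finset.mem_Icc.mp (hperm 2 (Finset.mem_Icc.mpr ⟨one_le_two, by omega⟩))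
  have hσ2_ne : σ 2 ≠ 1 := fun h ↦ by rw [σ.symm_apply_eq.mpr h.symm] at hinv1; omega
  rcases hk.2.lt_or_eq with hlt | heq
  · have hT := (hgen.realizesTriangle_two hGc (m := σ.symm 1) (by omega)
      (hdistG ⟨by omega, hlt⟩)).twist htw (by omega) (by omega) two_ne_zero
    have := (hT.le_add hHc).1
    rw [σ.apply_symm_apply] at this
    omega
  · have hσδ : σ δ = 1 := by rw [← heq, σ.apply_symm_apply]
    have hσ1 := apply_one_eq_of_apply_eq_one (by omega) hperm hσ' hσδ h1 h1'
    by_contra h2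
    obtain ⟨rfl, h2, h3, h4⟩ := eq_five_of_apply_two_ne_two hδ hperm hσ hσ' hσδ hσ1 h2
    exact not_isTwist_of_hasDiameter_five hGc hHc htw hdiam hσ1 h2 h3 h4 hσδ
end
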